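/- Fix a finite alphabet with EOS symbol and an autoregressive model with conditionals $p(\cdot \mid \text{prefix})$. There exist conditional distributions and a top-$k$ truncation (with $k=2$) such that two strings $u, v$ satisfy $p(u) > p(v)$ for the raw (truncated, unnormalized) product of conditionals, yet the locally renormalized top-$k$ model $\ddot{p}$ satisfies $\ddot{p}(u) < \ddot{p}(v)$. Concretely, for alphabet $\{a,b,c,\text{EOS}\}$ with $p(\cdot \mid t{=}1) = (0.5, 0.5, 0, 0)$, $p(\cdot \mid \text{last}=a) = (0.4, 0.1, 0.1, 0.4)$, $p(\cdot \mid \text{last}=b) = (0.1, 0.4, 0.2, 0.3)$ (probabilities for $a, b, c, \text{EOS}$): $p(aaa) = 0.032 > 0.024 = p(bbb)$ but under top-2 local renormalization $\ddot{p}(aaa) = 0.0625 < 0.06997\ldots = \ddot{p}(bbb)$. -/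

import Mathlib

/-- Symbols: `0 = a`, `1 = b`, `2 = c`, `3 = EOS`. Conditional next-symbol
distribution of the example language model. -/
noncomputable def lmCond (pre : List (Fin 4)) : Fin 4 → ℝ :=
  match pre.getLast? with
  | none => ![0.5, 0.5, 0, 0]
  | some l =>
      if l = 0 then ![0.4, 0.1, 0.1, 0.4]
      else if l = 1 then ![0.1, 0.4, 0.2, 0.3]
      else 0

/-- Top-2 truncated (unnormalized) conditionals: at the start keep `{a, b}`;
after `a` keep `{a, EOS}`; after `b` keep `{b, EOS}`. -/
noncomputable def lmTCond (pre : List (Fin 4)) (sym : Fin 4) : ℝ :=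
  match pre.getLast? with
  | none => if sym = 0 ∨ sym = 1 then lmCond pre sym else 0
  | some l =>
      if l = 0 then (if sym = 0 ∨ sym = 3 then lmCond pre sym else 0)
      else if l = 1 then (if sym = 1 ∨ sym = 3 then lmCond pre sym else 0)
      else 0

/-- Locally renormalized top-2 conditionals. -/
noncomputable def lmLCond (pre : List (Fin 4)) (sym : Fin 4) : ℝ :=
  lmTCond pre sym / ∑ s : Fin 4, lmTCond pre s

/-- Probability (score) of a string: product of the conditionals of its symbols
given the growing prefix, times the conditional of `EOS` at the end. -/
noncomputable def score (f : List (Fin 4) → Fin 4 → ℝ) :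
    List (Fin 4) → List (Fin 4) → ℝ
  | pre, [] => f pre 3
  | pre, s :: rest => f pre s * score f (pre ++ [s]) rest

/-! Both strings pay the same first step `0.5`; after that each string's conditionals depend only
on its last symbol. Raw truncation charges `aaa` the factors `0.4, 0.4, 0.4` and `bbb` the
factors `0.4, 0.4, 0.3`, but renormalizing divides the first by the kept mass `0.8` and the second
by the smaller kept mass `0.7`, which boosts `bbb` enough to overtake `aaa`. -/

theorem score_append_replicate {f : List (Fin 4) → Fin 4 → ℝ} {s : Fin 4} {g : Fin 4 → ℝ}
    (hf : ∀ pre, f (pre ++ [s]) = g) (pre : List (Fin 4)) (n : ℕ) :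
    score f (pre ++ [s]) (List.replicate n s) = g s ^ n * g 3 := by
  induction n generalizing pre with
  | zero => simp [score, hf]
  | succ n ih => rw [List.replicate_succ, score, ih, hf, pow_succ]; ring

theorem score_cons_replicate {f : List (Fin 4) → Fin 4 → ℝ} {s : Fin 4} {g : Fin 4 → ℝ}
    (hf : ∀ pre, f (pre ++ [s]) = g) (n : ℕ) :
    score f [] (s :: List.replicate n s) = f [] s * g s ^ n * g 3 := by
  rw [score, score_append_replicate hf, mul_assoc]

theorem lmTCond_nil : lmTCond [] = ![0.5, 0.5, 0, 0] := by
  ext s; fin_cases s <;> simp [lmTCond, lmCond]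

theorem lmTCond_append_zero (pre : List (Fin 4)) : lmTCond (pre ++ [0]) = ![0.4, 0, 0, 0.4] := by
  ext s; fin_cases s <;> simp [lmTCond, lmCond]

theorem lmTCond_append_one (pre : List (Fin 4)) : lmTCond (pre ++ [1]) = ![0, 0.4, 0, 0.3] := by
  ext s; fin_cases s <;> simp [lmTCond, lmCond]

theorem lmLCond_eq_div_of_lmTCond_eq {pre : List (Fin 4)} {a b c d : ℝ}
    (h : lmTCond pre = ![a, b, c, d]) :
    lmLCond pre = ![a, b, c, d] / fun _ => a + b + c + d := by
  ext s; simp [lmLCond, h, Fin.sum_univ_four]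

theorem lmLCond_nil : lmLCond [] = ![0.5, 0.5, 0, 0] := by
  rw [lmLCond_eq_div_of_lmTCond_eq lmTCond_nil]; ext s; fin_cases s <;> norm_num

theorem lmLCond_append_zero (pre : List (Fin 4)) : lmLCond (pre ++ [0]) = ![0.5, 0, 0, 0.5] := by
  rw [lmLCond_eq_div_of_lmTCond_eq (lmTCond_append_zero pre)]; ext s; fin_cases s <;> norm_num

theorem lmLCond_append_one (pre : List (Fin 4)) :
    lmLCond (pre ++ [1]) = ![0, 4 / 7, 0, 3 / 7] := by
  rw [lmLCond_eq_div_of_lmTCond_eq (lmTCond_append_one pre)]; ext s; fin_cases s <;> norm_num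

/-- Local renormalization in top-`k` sampling can reverse string probabilities:
the raw truncated scores give `p(aaa) = 0.032 > 0.024 = p(bbb)`, yet after local
renormalization `p̈(aaa) = 0.0625 < 0.06997… = p̈(bbb)`. -/
theorem stmt19 :
    score lmTCond [] [0, 0, 0] = 0.032 ∧
    score lmTCond [] [1, 1, 1] = 0.024 ∧
    score lmTCond [] [1, 1, 1] < score lmTCond [] [0, 0, 0] ∧
    score lmLCond [] [0, 0, 0] = 0.0625 ∧
    score lmLCond [] [0, 0, 0] < score lmLCond [] [1, 1, 1] := by
  have hTa : score lmTCond [] [0, 0, 0] = 0.032 :=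
    (score_cons_replicate lmTCond_append_zero 2).trans (by rw [lmTCond_nil]; norm_num [Matrix.cons_val_three])
  have hTb : score lmTCond [] [1, 1, 1] = 0.024 :=
    (score_cons_replicate lmTCond_append_one 2).trans (by rw [lmTCond_nil]; norm_num [Matrix.cons_val_three])
  have hLa : score lmLCond [] [0, 0, 0] = 0.0625 :=
    (score_cons_replicate lmLCond_append_zero 2).trans (by rw [lmLCond_nil]; norm_num [Matrix.cons_val_three])
  have hLb : score lmLCond [] [1, 1, 1] = 24 / 343 :=
    (score_cons_replicate lmLCond_append_one 2).trans (by rw [lmLCond_nil]; norm_num [Matrix.cons_val_three])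
  refine ⟨hTa, hTb, ?_, hLa, ?_⟩
  · rw [hTa, hTb]; norm_num
  · rw [hLa, hLb]; norm_num
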